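/- (Construction direction) Let Δ be an informational restriction and suppose ΔR^∞ is the largest fixed point of the Δ-rationalizability operator. Then there exists a finite information structure Y consistent with Δ—namely Y_i = A_i with π_i(θ_i, a_i) the justifying belief μ_i^{a_i,θ_i} embedded via the diagonal y_{-i} = a_{-i}—such that for every player i and payoff type θ_i, every a_i ∈ ΔR_i^∞(θ_i) satisfies a_i ∈ ICR_i^{∞,Y}(θ_i, a_i). -/
import Mathlib


open Finset

section Defs

variable {Θ0 Θ1 Θ2 A1 A2 Y1 Y2 : Type}
variable [Fintype Θ0] [Fintype Θ1] [Fintype Θ2] [Fintype A1] [Fintype A2]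
variable [Fintype Y1] [Fintype Y2]

/-- A probability distribution on a finite type, encoded as a nonnegative
function summing to one. -/
def IsProb {X : Type} [Fintype X] (μ : X → ℝ) : Prop :=
  (∀ x, 0 ≤ μ x) ∧ ∑ x, μ x = 1

/-- Expected utility of player 1 of action `a1` with payoff type `θ1` under
conjecture `μ` on `Θ0 × Θ2 × A2`. -/
def EU1 (u1 : A1 → A2 → Θ0 → Θ1 → Θ2 → ℝ) (μ : Θ0 × Θ2 × A2 → ℝ)
    (a1 : A1) (θ1 : Θ1) : ℝ :=
  ∑ x : Θ0 × Θ2 × A2, μ x * u1 a1 x.2.2 x.1 θ1 x.2.1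

def EU2 (u2 : A1 → A2 → Θ0 → Θ1 → Θ2 → ℝ) (μ : Θ0 × Θ1 × A1 → ℝ)
    (a2 : A2) (θ2 : Θ2) : ℝ :=
  ∑ x : Θ0 × Θ1 × A1, μ x * u2 x.2.2 a2 x.1 x.2.1 θ2

/-- Best replies of player 1 against conjecture `μ` for payoff type `θ1`. -/
def BR1 (u1 : A1 → A2 → Θ0 → Θ1 → Θ2 → ℝ) (μ : Θ0 × Θ2 × A2 → ℝ) (θ1 : Θ1) : Set A1 :=
  {a1 | ∀ b1, EU1 u1 μ b1 θ1 ≤ EU1 u1 μ a1 θ1}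

def BR2 (u2 : A1 → A2 → Θ0 → Θ1 → Θ2 → ℝ) (μ : Θ0 × Θ1 × A1 → ℝ) (θ2 : Θ2) : Set A2 :=
  {a2 | ∀ b2, EU2 u2 μ b2 θ2 ≤ EU2 u2 μ a2 θ2}

/-- One elimination step of belief-free rationalizability for player 1, given the
opponent's surviving correspondence `F2`. -/
def step1 (u1 : A1 → A2 → Θ0 → Θ1 → Θ2 → ℝ) (F2 : Θ2 → Set A2) (θ1 : Θ1) : Set A1 :=
  {a1 | ∃ μ : Θ0 × Θ2 × A2 → ℝ, IsProb μ ∧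
    (∀ x, μ x ≠ 0 → x.2.2 ∈ F2 x.2.1) ∧ a1 ∈ BR1 u1 μ θ1}

def step2 (u2 : A1 → A2 → Θ0 → Θ1 → Θ2 → ℝ) (F1 : Θ1 → Set A1) (θ2 : Θ2) : Set A2 :=
  {a2 | ∃ μ : Θ0 × Θ1 × A1 → ℝ, IsProb μ ∧
    (∀ x, μ x ≠ 0 → x.2.2 ∈ F1 x.2.1) ∧ a2 ∈ BR2 u2 μ θ2}

/-- The iterative belief-free rationalizability procedure (both players). -/
def BFR (u1 u2 : A1 → A2 → Θ0 → Θ1 → Θ2 → ℝ) :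
    ℕ → (Θ1 → Set A1) × (Θ2 → Set A2)
  | 0 => (fun _ => Set.univ, fun _ => Set.univ)
  | n + 1 =>
      (fun θ1 => (BFR u1 u2 n).1 θ1 ∩ step1 u1 (BFR u1 u2 n).2 θ1,
       fun θ2 => (BFR u1 u2 n).2 θ2 ∩ step2 u2 (BFR u1 u2 n).1 θ2)

def BFRinf1 (u1 u2 : A1 → A2 → Θ0 → Θ1 → Θ2 → ℝ) (θ1 : Θ1) : Set A1 :=
  ⋂ n, (BFR u1 u2 n).1 θ1

def BFRinf2 (u1 u2 : A1 → A2 → Θ0 → Θ1 → Θ2 → ℝ) (θ2 : Θ2) : Set A2 :=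
  ⋂ n, (BFR u1 u2 n).2 θ2

/-- Marginal on `Θ0 × Θ2 × A2` of a belief on `Θ0 × Θ2 × Y2 × A2`. -/
def margA1 (μ : Θ0 × Θ2 × Y2 × A2 → ℝ) : Θ0 × Θ2 × A2 → ℝ :=
  fun x => ∑ y2 : Y2, μ (x.1, x.2.1, y2, x.2.2)

/-- Marginal on `Θ0 × Θ2 × Y2` of a belief on `Θ0 × Θ2 × Y2 × A2`. -/
def margY1 (μ : Θ0 × Θ2 × Y2 × A2 → ℝ) : Θ0 × Θ2 × Y2 → ℝ :=
  fun x => ∑ a2 : A2, μ (x.1, x.2.1, x.2.2, a2)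

def margA2 (μ : Θ0 × Θ1 × Y1 × A1 → ℝ) : Θ0 × Θ1 × A1 → ℝ :=
  fun x => ∑ y1 : Y1, μ (x.1, x.2.1, y1, x.2.2)

def margY2 (μ : Θ0 × Θ1 × Y1 × A1 → ℝ) : Θ0 × Θ1 × Y1 → ℝ :=
  fun x => ∑ a1 : A1, μ (x.1, x.2.1, x.2.2, a1)

/-- One elimination step of interim correlated rationalizability for player 1. -/
def istep1 (u1 : A1 → A2 → Θ0 → Θ1 → Θ2 → ℝ)
    (π1 : Θ1 → Y1 → (Θ0 × Θ2 × Y2 → ℝ)) (F2 : Θ2 → Y2 → Set A2)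
    (θ1 : Θ1) (y1 : Y1) : Set A1 :=
  {a1 | ∃ μ : Θ0 × Θ2 × Y2 × A2 → ℝ, IsProb μ ∧
    (∀ x, μ x ≠ 0 → x.2.2.2 ∈ F2 x.2.1 x.2.2.1) ∧
    margY1 μ = π1 θ1 y1 ∧ a1 ∈ BR1 u1 (margA1 μ) θ1}

def istep2 (u2 : A1 → A2 → Θ0 → Θ1 → Θ2 → ℝ)
    (π2 : Θ2 → Y2 → (Θ0 × Θ1 × Y1 → ℝ)) (F1 : Θ1 → Y1 → Set A1)
    (θ2 : Θ2) (y2 : Y2) : Set A2 :=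
  {a2 | ∃ μ : Θ0 × Θ1 × Y1 × A1 → ℝ, IsProb μ ∧
    (∀ x, μ x ≠ 0 → x.2.2.2 ∈ F1 x.2.1 x.2.2.1) ∧
    margY2 μ = π2 θ2 y2 ∧ a2 ∈ BR2 u2 (margA2 μ) θ2}

/-- The iterative interim correlated rationalizability procedure in the Bayesian
game with information structure `(Y1, Y2, π1, π2)`. -/
def ICR (u1 u2 : A1 → A2 → Θ0 → Θ1 → Θ2 → ℝ)
    (π1 : Θ1 → Y1 → (Θ0 × Θ2 × Y2 → ℝ)) (π2 : Θ2 → Y2 → (Θ0 × Θ1 × Y1 → ℝ)) :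
    ℕ → (Θ1 → Y1 → Set A1) × (Θ2 → Y2 → Set A2)
  | 0 => (fun _ _ => Set.univ, fun _ _ => Set.univ)
  | n + 1 =>
      (fun θ1 y1 => (ICR u1 u2 π1 π2 n).1 θ1 y1 ∩
          istep1 u1 π1 (ICR u1 u2 π1 π2 n).2 θ1 y1,
       fun θ2 y2 => (ICR u1 u2 π1 π2 n).2 θ2 y2 ∩
          istep2 u2 π2 (ICR u1 u2 π1 π2 n).1 θ2 y2)

def ICRinf1 (u1 u2 : A1 → A2 → Θ0 → Θ1 → Θ2 → ℝ)
    (π1 : Θ1 → Y1 → (Θ0 × Θ2 × Y2 → ℝ)) (π2 : Θ2 → Y2 → (Θ0 × Θ1 × Y1 → ℝ))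
    (θ1 : Θ1) (y1 : Y1) : Set A1 :=
  ⋂ n, (ICR u1 u2 π1 π2 n).1 θ1 y1

def ICRinf2 (u1 u2 : A1 → A2 → Θ0 → Θ1 → Θ2 → ℝ)
    (π1 : Θ1 → Y1 → (Θ0 × Θ2 × Y2 → ℝ)) (π2 : Θ2 → Y2 → (Θ0 × Θ1 × Y1 → ℝ))
    (θ2 : Θ2) (y2 : Y2) : Set A2 :=
  ⋂ n, (ICR u1 u2 π1 π2 n).2 θ2 y2

/-- Distribution over `(θ0, θ_{-i}, a_{-i})` induced by `π1(θ1,y1)` and the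
opponent's strategy `s2`. -/
def push1 [DecidableEq A2] (π1 : Θ1 → Y1 → (Θ0 × Θ2 × Y2 → ℝ))
    (s2 : Θ2 → Y2 → A2) (θ1 : Θ1) (y1 : Y1) : Θ0 × Θ2 × A2 → ℝ :=
  fun x => ∑ y2 : Y2, if s2 x.2.1 y2 = x.2.2 then π1 θ1 y1 (x.1, x.2.1, y2) else 0

def push2 [DecidableEq A1] (π2 : Θ2 → Y2 → (Θ0 × Θ1 × Y1 → ℝ))
    (s1 : Θ1 → Y1 → A1) (θ2 : Θ2) (y2 : Y2) : Θ0 × Θ1 × A1 → ℝ :=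
  fun x => ∑ y1 : Y1, if s1 x.2.1 y1 = x.2.2 then π2 θ2 y2 (x.1, x.2.1, y1) else 0

/-- Bayes-Nash equilibrium of the Bayesian game. -/
def IsBNE [DecidableEq A1] [DecidableEq A2]
    (u1 u2 : A1 → A2 → Θ0 → Θ1 → Θ2 → ℝ)
    (π1 : Θ1 → Y1 → (Θ0 × Θ2 × Y2 → ℝ)) (π2 : Θ2 → Y2 → (Θ0 × Θ1 × Y1 → ℝ))
    (s1 : Θ1 → Y1 → A1) (s2 : Θ2 → Y2 → A2) : Prop :=
  (∀ θ1 y1, s1 θ1 y1 ∈ BR1 u1 (push1 π1 s2 θ1 y1) θ1) ∧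
  (∀ θ2 y2, s2 θ2 y2 ∈ BR2 u2 (push2 π2 s1 θ2 y2) θ2)

/-- One elimination step of Δ-rationalizability for player 1 under the
informational restriction `D1`. -/
def dstep1 (u1 : A1 → A2 → Θ0 → Θ1 → Θ2 → ℝ)
    (D1 : Θ1 → Set (Θ0 × Θ2 → ℝ)) (F2 : Θ2 → Set A2) (θ1 : Θ1) : Set A1 :=
  {a1 | ∃ μ : Θ0 × Θ2 × A2 → ℝ, IsProb μ ∧
    (fun p : Θ0 × Θ2 => ∑ a2 : A2, μ (p.1, p.2, a2)) ∈ D1 θ1 ∧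
    (∀ x, μ x ≠ 0 → x.2.2 ∈ F2 x.2.1) ∧ a1 ∈ BR1 u1 μ θ1}

def dstep2 (u2 : A1 → A2 → Θ0 → Θ1 → Θ2 → ℝ)
    (D2 : Θ2 → Set (Θ0 × Θ1 → ℝ)) (F1 : Θ1 → Set A1) (θ2 : Θ2) : Set A2 :=
  {a2 | ∃ μ : Θ0 × Θ1 × A1 → ℝ, IsProb μ ∧
    (fun p : Θ0 × Θ1 => ∑ a1 : A1, μ (p.1, p.2, a1)) ∈ D2 θ2 ∧
    (∀ x, μ x ≠ 0 → x.2.2 ∈ F1 x.2.1) ∧ a2 ∈ BR2 u2 μ θ2}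

/-- The iterative Δ-rationalizability procedure. -/
def DR (u1 u2 : A1 → A2 → Θ0 → Θ1 → Θ2 → ℝ)
    (D1 : Θ1 → Set (Θ0 × Θ2 → ℝ)) (D2 : Θ2 → Set (Θ0 × Θ1 → ℝ)) :
    ℕ → (Θ1 → Set A1) × (Θ2 → Set A2)
  | 0 => (fun _ => Set.univ, fun _ => Set.univ)
  | n + 1 =>
      (fun θ1 => (DR u1 u2 D1 D2 n).1 θ1 ∩ dstep1 u1 D1 (DR u1 u2 D1 D2 n).2 θ1,
       fun θ2 => (DR u1 u2 D1 D2 n).2 θ2 ∩ dstep2 u2 D2 (DR u1 u2 D1 D2 n).1 θ2)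

def DRinf1 (u1 u2 : A1 → A2 → Θ0 → Θ1 → Θ2 → ℝ)
    (D1 : Θ1 → Set (Θ0 × Θ2 → ℝ)) (D2 : Θ2 → Set (Θ0 × Θ1 → ℝ)) (θ1 : Θ1) : Set A1 :=
  ⋂ n, (DR u1 u2 D1 D2 n).1 θ1

def DRinf2 (u1 u2 : A1 → A2 → Θ0 → Θ1 → Θ2 → ℝ)
    (D1 : Θ1 → Set (Θ0 × Θ2 → ℝ)) (D2 : Θ2 → Set (Θ0 × Θ1 → ℝ)) (θ2 : Θ2) : Set A2 :=
  ⋂ n, (DR u1 u2 D1 D2 n).2 θ2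

end Defs

section Aux

open Classical

variable {Θ0 Θ1 Θ2 A1 A2 : Type}
variable [Fintype Θ0] [Fintype Θ1] [Fintype Θ2] [Fintype A1] [Fintype A2]
variable (u1 u2 : A1 → A2 → Θ0 → Θ1 → Θ2 → ℝ)
variable (D1 : Θ1 → Set (Θ0 × Θ2 → ℝ)) (D2 : Θ2 → Set (Θ0 × Θ1 → ℝ))

lemma DR_succ_sub (n : ℕ) :
    (∀ θ1, (DR u1 u2 D1 D2 (n+1)).1 θ1 ⊆ (DR u1 u2 D1 D2 n).1 θ1) ∧
    (∀ θ2, (DR u1 u2 D1 D2 (n+1)).2 θ2 ⊆ (DR u1 u2 D1 D2 n).2 θ2) :=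
  ⟨fun _ _ h => h.1, fun _ _ h => h.1⟩

lemma DR_le_sub : ∀ {m n : ℕ}, n ≤ m →
    (∀ θ1, (DR u1 u2 D1 D2 m).1 θ1 ⊆ (DR u1 u2 D1 D2 n).1 θ1) ∧
    (∀ θ2, (DR u1 u2 D1 D2 m).2 θ2 ⊆ (DR u1 u2 D1 D2 n).2 θ2) := by
  intro m
  induction m with
  | zero =>
      intro n h
      have : n = 0 := Nat.le_zero.mp h
      subst this
      exact ⟨fun _ => subset_rfl, fun _ => subset_rfl⟩
  | succ m ih =>
      intro n h
      rcases Nat.eq_or_lt_of_le h with h' | h'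
      · subst h'
        exact ⟨fun _ => subset_rfl, fun _ => subset_rfl⟩
      · have hnm : n ≤ m := Nat.lt_succ_iff.mp h'
        exact ⟨fun θ1 => ((DR_succ_sub u1 u2 D1 D2 m).1 θ1).trans ((ih hnm).1 θ1),
               fun θ2 => ((DR_succ_sub u1 u2 D1 D2 m).2 θ2).trans ((ih hnm).2 θ2)⟩

lemma DR_step_congr {m m' : ℕ}
    (h : DR u1 u2 D1 D2 m = DR u1 u2 D1 D2 m') :
    DR u1 u2 D1 D2 (m+1) = DR u1 u2 D1 D2 (m'+1) := by
  simp only [DR]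
  rw [h]

lemma DR_stab : ∃ N, ∀ k, DR u1 u2 D1 D2 (N + k) = DR u1 u2 D1 D2 N := by
  suffices h : ∃ N, DR u1 u2 D1 D2 (N+1) = DR u1 u2 D1 D2 N by
    obtain ⟨N, hN⟩ := h
    refine ⟨N, fun k => ?_⟩
    induction k with
    | zero => rfl
    | succ k ih =>
        have : DR u1 u2 D1 D2 (N + k + 1) = DR u1 u2 D1 D2 (N + 1) :=
          DR_step_congr u1 u2 D1 D2 ih
        calc DR u1 u2 D1 D2 (N + (k+1)) = DR u1 u2 D1 D2 (N + k + 1) := rfl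
        _ = DR u1 u2 D1 D2 (N + 1) := this
        _ = DR u1 u2 D1 D2 N := hN
  by_contra hc
  push_neg at hc
  set msr : ℕ → ℕ := fun n =>
    (∑ θ1 : Θ1, (Set.toFinite ((DR u1 u2 D1 D2 n).1 θ1)).toFinset.card) +
    (∑ θ2 : Θ2, (Set.toFinite ((DR u1 u2 D1 D2 n).2 θ2)).toFinset.card) with hmsr
  have hlt : ∀ n, msr (n+1) < msr n := by
    intro n
    have h1 : ∀ θ1 : Θ1,
        (Set.toFinite ((DR u1 u2 D1 D2 (n+1)).1 θ1)).toFinset ⊆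
        (Set.toFinite ((DR u1 u2 D1 D2 n).1 θ1)).toFinset := fun θ1 =>
      Set.Finite.toFinset_subset_toFinset.mpr ((DR_succ_sub u1 u2 D1 D2 n).1 θ1)
    have h2 : ∀ θ2 : Θ2,
        (Set.toFinite ((DR u1 u2 D1 D2 (n+1)).2 θ2)).toFinset ⊆
        (Set.toFinite ((DR u1 u2 D1 D2 n).2 θ2)).toFinset := fun θ2 =>
      Set.Finite.toFinset_subset_toFinset.mpr ((DR_succ_sub u1 u2 D1 D2 n).2 θ2)
    have hs1 : (∑ θ1 : Θ1, (Set.toFinite ((DR u1 u2 D1 D2 (n+1)).1 θ1)).toFinset.card) ≤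
        ∑ θ1 : Θ1, (Set.toFinite ((DR u1 u2 D1 D2 n).1 θ1)).toFinset.card :=
      Finset.sum_le_sum fun θ1 _ => Finset.card_le_card (h1 θ1)
    have hs2 : (∑ θ2 : Θ2, (Set.toFinite ((DR u1 u2 D1 D2 (n+1)).2 θ2)).toFinset.card) ≤
        ∑ θ2 : Θ2, (Set.toFinite ((DR u1 u2 D1 D2 n).2 θ2)).toFinset.card :=
      Finset.sum_le_sum fun θ2 _ => Finset.card_le_card (h2 θ2)
    have hle : msr (n+1) ≤ msr n := add_le_add hs1 hs2
    rcases lt_or_eq_of_le hle with h | h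
    · exact h
    · exfalso
      apply hc n
      have he1 : (∑ θ1 : Θ1, (Set.toFinite ((DR u1 u2 D1 D2 (n+1)).1 θ1)).toFinset.card) =
          ∑ θ1 : Θ1, (Set.toFinite ((DR u1 u2 D1 D2 n).1 θ1)).toFinset.card := by
        simp only [hmsr] at h; omega
      have he2 : (∑ θ2 : Θ2, (Set.toFinite ((DR u1 u2 D1 D2 (n+1)).2 θ2)).toFinset.card) =
          ∑ θ2 : Θ2, (Set.toFinite ((DR u1 u2 D1 D2 n).2 θ2)).toFinset.card := by
        simp only [hmsr] at h; omega
      have hp1 := (Finset.sum_eq_sum_iff_of_le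
        (fun θ1 _ => Finset.card_le_card (h1 θ1))).mp he1
      have hp2 := (Finset.sum_eq_sum_iff_of_le
        (fun θ2 _ => Finset.card_le_card (h2 θ2))).mp he2
      have e1 : ∀ θ1, (DR u1 u2 D1 D2 (n+1)).1 θ1 = (DR u1 u2 D1 D2 n).1 θ1 := by
        intro θ1
        have := Finset.eq_of_subset_of_card_le (h1 θ1)
          (le_of_eq (hp1 θ1 (Finset.mem_univ θ1)).symm)
        have := Set.Finite.toFinset_inj.mp this
        exact this
      have e2 : ∀ θ2, (DR u1 u2 D1 D2 (n+1)).2 θ2 = (DR u1 u2 D1 D2 n).2 θ2 := by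
        intro θ2
        have := Finset.eq_of_subset_of_card_le (h2 θ2)
          (le_of_eq (hp2 θ2 (Finset.mem_univ θ2)).symm)
        exact Set.Finite.toFinset_inj.mp this
      exact Prod.ext (funext e1) (funext e2)
  have hbound : ∀ n, msr n + n ≤ msr 0 := by
    intro n
    induction n with
    | zero => simp
    | succ n ih => have := hlt n; omega
  have := hbound (msr 0 + 1)
  omega

lemma DRinf_eq_of_stab {N : ℕ}
    (h : ∀ k, DR u1 u2 D1 D2 (N + k) = DR u1 u2 D1 D2 N) :
    (∀ θ1, DRinf1 u1 u2 D1 D2 θ1 = (DR u1 u2 D1 D2 N).1 θ1) ∧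
    (∀ θ2, DRinf2 u1 u2 D1 D2 θ2 = (DR u1 u2 D1 D2 N).2 θ2) := by
  have key : ∀ n, N ≤ n → DR u1 u2 D1 D2 n = DR u1 u2 D1 D2 N := by
    intro n hn
    have := h (n - N)
    rwa [Nat.add_sub_cancel' hn] at this
  constructor
  · intro θ1
    apply Set.Subset.antisymm
    · exact Set.iInter_subset _ N
    · intro a ha
      apply Set.mem_iInter.mpr
      intro n
      rcases le_or_gt n N with hn | hn
      · exact (DR_le_sub u1 u2 D1 D2 hn).1 θ1 ha
      · rw [key n hn.le]; exact ha
  · intro θ2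
    apply Set.Subset.antisymm
    · exact Set.iInter_subset _ N
    · intro a ha
      apply Set.mem_iInter.mpr
      intro n
      rcases le_or_gt n N with hn | hn
      · exact (DR_le_sub u1 u2 D1 D2 hn).2 θ2 ha
      · rw [key n hn.le]; exact ha

lemma DRinf_fix1 (θ1 : Θ1) (a1 : A1) (h : a1 ∈ DRinf1 u1 u2 D1 D2 θ1) :
    ∃ μ : Θ0 × Θ2 × A2 → ℝ, IsProb μ ∧
      (fun p : Θ0 × Θ2 => ∑ a2 : A2, μ (p.1, p.2, a2)) ∈ D1 θ1 ∧
      (∀ x, μ x ≠ 0 → x.2.2 ∈ DRinf2 u1 u2 D1 D2 x.2.1) ∧ a1 ∈ BR1 u1 μ θ1 := by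
  obtain ⟨N, hN⟩ := DR_stab u1 u2 D1 D2
  have hinf := DRinf_eq_of_stab u1 u2 D1 D2 hN
  have h1 : a1 ∈ (DR u1 u2 D1 D2 (N+1)).1 θ1 := Set.mem_iInter.mp h (N+1)
  obtain ⟨-, μ, hP, hD, hsupp, hBR⟩ := h1
  refine ⟨μ, hP, hD, ?_, hBR⟩
  intro x hx
  rw [hinf.2 x.2.1]
  exact hsupp x hx

lemma DRinf_fix2 (θ2 : Θ2) (a2 : A2) (h : a2 ∈ DRinf2 u1 u2 D1 D2 θ2) :
    ∃ μ : Θ0 × Θ1 × A1 → ℝ, IsProb μ ∧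
      (fun p : Θ0 × Θ1 => ∑ a1 : A1, μ (p.1, p.2, a1)) ∈ D2 θ2 ∧
      (∀ x, μ x ≠ 0 → x.2.2 ∈ DRinf1 u1 u2 D1 D2 x.2.1) ∧ a2 ∈ BR2 u2 μ θ2 := by
  obtain ⟨N, hN⟩ := DR_stab u1 u2 D1 D2
  have hinf := DRinf_eq_of_stab u1 u2 D1 D2 hN
  have h1 : a2 ∈ (DR u1 u2 D1 D2 (N+1)).2 θ2 := Set.mem_iInter.mp h (N+1)
  obtain ⟨-, μ, hP, hD, hsupp, hBR⟩ := h1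
  refine ⟨μ, hP, hD, ?_, hBR⟩
  intro x hx
  rw [hinf.1 x.2.1]
  exact hsupp x hx

end Aux


theorem dr_construction_direction {Θ0 Θ1 Θ2 A1 A2 : Type} [Fintype Θ0] [Fintype Θ1] [Fintype Θ2] [Fintype A1] [Fintype A2]
    (u1 u2 : A1 → A2 → Θ0 → Θ1 → Θ2 → ℝ)
    (D1 : Θ1 → Set (Θ0 × Θ2 → ℝ)) (D2 : Θ2 → Set (Θ0 × Θ1 → ℝ))
    [Nonempty A1] [Nonempty A2]
    (hne1 : ∀ θ1 : Θ1, (D1 θ1).Nonempty) (hne2 : ∀ θ2 : Θ2, (D2 θ2).Nonempty)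
    (hsub1 : ∀ θ1 : Θ1, D1 θ1 ⊆ {p | IsProb p})
    (hsub2 : ∀ θ2 : Θ2, D2 θ2 ⊆ {p | IsProb p}) :
    ∃ (π1 : Θ1 → A1 → (Θ0 × Θ2 × A2 → ℝ)) (π2 : Θ2 → A2 → (Θ0 × Θ1 × A1 → ℝ)),
      (∀ θ1 y1, IsProb (π1 θ1 y1)) ∧ (∀ θ2 y2, IsProb (π2 θ2 y2)) ∧
      (∀ (θ1 : Θ1) (y1 : A1),
        (fun p : Θ0 × Θ2 => ∑ y2 : A2, π1 θ1 y1 (p.1, p.2, y2)) ∈ D1 θ1) ∧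
      (∀ (θ2 : Θ2) (y2 : A2),
        (fun p : Θ0 × Θ1 => ∑ y1 : A1, π2 θ2 y2 (p.1, p.2, y1)) ∈ D2 θ2) ∧
      (∀ (θ1 : Θ1) (a1 : A1), a1 ∈ DRinf1 u1 u2 D1 D2 θ1 →
        a1 ∈ ICRinf1 u1 u2 π1 π2 θ1 a1) ∧
      (∀ (θ2 : Θ2) (a2 : A2), a2 ∈ DRinf2 u1 u2 D1 D2 θ2 →
        a2 ∈ ICRinf2 u1 u2 π1 π2 θ2 a2) := by
  classical
  -- beliefs for each information type, justifying rationalizable actions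
  have key1 : ∀ (θ1 : Θ1) (a1 : A1), ∃ μ : Θ0 × Θ2 × A2 → ℝ, IsProb μ ∧
      (fun p : Θ0 × Θ2 => ∑ a2 : A2, μ (p.1, p.2, a2)) ∈ D1 θ1 ∧
      (a1 ∈ DRinf1 u1 u2 D1 D2 θ1 →
        (∀ x, μ x ≠ 0 → x.2.2 ∈ DRinf2 u1 u2 D1 D2 x.2.1) ∧ a1 ∈ BR1 u1 μ θ1) := by
    intro θ1 a1
    by_cases h : a1 ∈ DRinf1 u1 u2 D1 D2 θ1
    · obtain ⟨μ, hP, hD, hsupp, hBR⟩ := DRinf_fix1 u1 u2 D1 D2 θ1 a1 h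
      exact ⟨μ, hP, hD, fun _ => ⟨hsupp, hBR⟩⟩
    · obtain ⟨p, hpmem⟩ := hne1 θ1
      have hp : IsProb p := hsub1 θ1 hpmem
      set astar : A2 := Classical.arbitrary A2 with hastar
      refine ⟨fun x => if x.2.2 = astar then p (x.1, x.2.1) else 0, ⟨?_, ?_⟩, ?_, fun h' => absurd h' h⟩
      · intro x; dsimp only; split
        · exact hp.1 _
        · exact le_rfl
      · rw [← hp.2]
        simp [Fintype.sum_prod_type, Finset.sum_ite_eq']
      · have : (fun q : Θ0 × Θ2 =>
            ∑ a2 : A2, if a2 = astar then p (q.1, q.2) else 0) = p := by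
          funext q
          simp [Finset.sum_ite_eq']
        rw [this]
        exact hpmem
  have key2 : ∀ (θ2 : Θ2) (a2 : A2), ∃ μ : Θ0 × Θ1 × A1 → ℝ, IsProb μ ∧
      (fun p : Θ0 × Θ1 => ∑ a1 : A1, μ (p.1, p.2, a1)) ∈ D2 θ2 ∧
      (a2 ∈ DRinf2 u1 u2 D1 D2 θ2 →
        (∀ x, μ x ≠ 0 → x.2.2 ∈ DRinf1 u1 u2 D1 D2 x.2.1) ∧ a2 ∈ BR2 u2 μ θ2) := by
    intro θ2 a2
    by_cases h : a2 ∈ DRinf2 u1 u2 D1 D2 θ2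
    · obtain ⟨μ, hP, hD, hsupp, hBR⟩ := DRinf_fix2 u1 u2 D1 D2 θ2 a2 h
      exact ⟨μ, hP, hD, fun _ => ⟨hsupp, hBR⟩⟩
    · obtain ⟨p, hpmem⟩ := hne2 θ2
      have hp : IsProb p := hsub2 θ2 hpmem
      set astar : A1 := Classical.arbitrary A1 with hastar
      refine ⟨fun x => if x.2.2 = astar then p (x.1, x.2.1) else 0, ⟨?_, ?_⟩, ?_, fun h' => absurd h' h⟩
      · intro x; dsimp only; split
        · exact hp.1 _
        · exact le_rfl
      · rw [← hp.2]
        simp [Fintype.sum_prod_type, Finset.sum_ite_eq']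
      · have : (fun q : Θ0 × Θ1 =>
            ∑ a1 : A1, if a1 = astar then p (q.1, q.2) else 0) = p := by
          funext q
          simp [Finset.sum_ite_eq']
        rw [this]
        exact hpmem
  choose π1 hπ1 using key1
  choose π2 hπ2 using key2
  -- main induction: rationalizable actions survive each round of ICR
  have main : ∀ n : ℕ,
      (∀ (θ1 : Θ1) (a1 : A1), a1 ∈ DRinf1 u1 u2 D1 D2 θ1 →
        a1 ∈ (ICR u1 u2 π1 π2 n).1 θ1 a1) ∧
      (∀ (θ2 : Θ2) (a2 : A2), a2 ∈ DRinf2 u1 u2 D1 D2 θ2 →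
        a2 ∈ (ICR u1 u2 π1 π2 n).2 θ2 a2) := by
    intro n
    induction n with
    | zero => exact ⟨fun _ _ _ => Set.mem_univ _, fun _ _ _ => Set.mem_univ _⟩
    | succ n ih =>
        constructor
        · intro θ1 a1 h
          refine ⟨ih.1 θ1 a1 h, ?_⟩
          obtain ⟨hsupp, hBR⟩ := (hπ1 θ1 a1).2.2 h
          refine ⟨fun x => if x.2.2.1 = x.2.2.2 then π1 θ1 a1 (x.1, x.2.1, x.2.2.2) else 0,
            ⟨?_, ?_⟩, ?_, ?_, ?_⟩
          · intro x; dsimp only; split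
            · exact (hπ1 θ1 a1).1.1 _
            · exact le_rfl
          · rw [← (hπ1 θ1 a1).1.2]
            simp [Fintype.sum_prod_type, Finset.sum_ite_eq]
          · intro x hx
            dsimp only at hx
            by_cases hxe : x.2.2.1 = x.2.2.2
            · rw [if_pos hxe] at hx
              have h2 := hsupp (x.1, x.2.1, x.2.2.2) hx
              rw [hxe]
              exact ih.2 x.2.1 x.2.2.2 h2
            · rw [if_neg hxe] at hx
              exact absurd rfl hx
          · funext z
            simp [margY1, Finset.sum_ite_eq]
          · have hm : margA1 (fun x : Θ0 × Θ2 × A2 × A2 =>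
                if x.2.2.1 = x.2.2.2 then π1 θ1 a1 (x.1, x.2.1, x.2.2.2) else 0) = π1 θ1 a1 := by
              funext z
              simp [margA1, Finset.sum_ite_eq']
            rw [hm]
            exact hBR
        · intro θ2 a2 h
          refine ⟨ih.2 θ2 a2 h, ?_⟩
          obtain ⟨hsupp, hBR⟩ := (hπ2 θ2 a2).2.2 h
          refine ⟨fun x => if x.2.2.1 = x.2.2.2 then π2 θ2 a2 (x.1, x.2.1, x.2.2.2) else 0,
            ⟨?_, ?_⟩, ?_, ?_, ?_⟩
          · intro x; dsimp only; split
            · exact (hπ2 θ2 a2).1.1 _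
            · exact le_rfl
          · rw [← (hπ2 θ2 a2).1.2]
            simp [Fintype.sum_prod_type, Finset.sum_ite_eq]
          · intro x hx
            dsimp only at hx
            by_cases hxe : x.2.2.1 = x.2.2.2
            · rw [if_pos hxe] at hx
              have h1 := hsupp (x.1, x.2.1, x.2.2.2) hx
              rw [hxe]
              exact ih.1 x.2.1 x.2.2.2 h1
            · rw [if_neg hxe] at hx
              exact absurd rfl hx
          · funext z
            simp [margY2, Finset.sum_ite_eq]
          · have hm : margA2 (fun x : Θ0 × Θ1 × A1 × A1 =>
                if x.2.2.1 = x.2.2.2 then π2 θ2 a2 (x.1, x.2.1, x.2.2.2) else 0) = π2 θ2 a2 := by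
              funext z
              simp [margA2, Finset.sum_ite_eq']
            rw [hm]
            exact hBR
  refine ⟨π1, π2, fun θ1 y1 => (hπ1 θ1 y1).1, fun θ2 y2 => (hπ2 θ2 y2).1,
    fun θ1 y1 => (hπ1 θ1 y1).2.1, fun θ2 y2 => (hπ2 θ2 y2).2.1, ?_, ?_⟩
  · intro θ1 a1 h
    exact Set.mem_iInter.mpr fun n => (main n).1 θ1 a1 h
  · intro θ2 a2 h
    exact Set.mem_iInter.mpr fun n => (main n).2 θ2 a2 h
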